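/- arXiv:2506.23758 — 2 statements merged into one kernel-verified Lean document; each statement's English description precedes it below -/
import Mathlib

section
/- Let f : ℝ^d → ℝ be L-smooth and f_β its ball smoothing with parameter β > 0. Then for every x ∈ ℝ^d, ‖∇f_β(x) − ∇f(x)‖² ≤ (L² d² / 4) β². -/
open MeasureTheory

/-- Uniform-ball smoothing: `f_β(x) = E_{u ~ U(B^d)}[f(x + β u)]`. -/
noncomputable def ballSmooth {d : ℕ} (f : EuclideanSpace ℝ (Fin d) → ℝ) (β : ℝ)
    (x : EuclideanSpace ℝ (Fin d)) : ℝ :=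
  ⨍ u in Metric.closedBall (0 : EuclideanSpace ℝ (Fin d)) 1, f (x + β • u)

/-!
Differentiating under the integral sign, `∇f_β(x) - ∇f(x)` is the ball average of
`∇f(x + βu) - ∇f(x)`, whose norm is at most `L|β|‖u‖`. Hence the distance is at most
`L|β|` times the mean of `‖u‖` over the unit ball, which integration in polar coordinates
evaluates to `d / (d + 1) ≤ d / 2`.
-/

open Metric Set Module

theorem setIntegral_Ioi_pow_pred_smul_indicator_Iic {n : ℕ} (hn : 1 ≤ n) :
    ∫ y in Ioi (0 : ℝ), y ^ (n - 1) • (Iic 1).indicator id y = 1 / (n + 1) := by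
  have h (y : ℝ) : y ^ (n - 1) • (Iic 1).indicator id y = (Iic 1).indicator (· ^ n) y := by
    by_cases hy : y ≤ 1 <;> simp [hy, ← pow_succ, Nat.sub_add_cancel hn]
  simp_rw [h]
  rw [setIntegral_indicator measurableSet_Iic, Ioi_inter_Iic,
    ← intervalIntegral.integral_of_le zero_le_one, integral_pow]
  simp

section RadialAverage

variable {E : Type*} [NormedAddCommGroup E] [NormedSpace ℝ E] [FiniteDimensional ℝ E]
  [Nontrivial E] [MeasurableSpace E] [BorelSpace E] (μ : Measure E) [μ.IsAddHaarMeasure]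

theorem integral_norm_closedBall_zero_one :
    ∫ u in closedBall (0 : E) 1, ‖u‖ ∂μ = finrank ℝ E * μ.real (ball 0 1) / (finrank ℝ E + 1) := by
  have hball : (closedBall (0 : E) 1).indicator norm = fun u ↦ (Iic 1).indicator id ‖u‖ := by
    ext u
    rw [← indicator_comp_right]
    congr 1
    ext; simp
  rw [← integral_indicator measurableSet_closedBall, hball, integral_fun_norm_addHaar,
    setIntegral_Ioi_pow_pred_smul_indicator_Iic finrank_pos, nsmul_eq_mul, smul_eq_mul]
  ring

theorem setAverage_norm_closedBall_zero_one :
    ⨍ u in closedBall (0 : E) 1, ‖u‖ ∂μ = finrank ℝ E / (finrank ℝ E + 1) := by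
  have hpos : 0 < μ.real (ball (0 : E) 1) :=
    ENNReal.toReal_pos (measure_ball_pos μ 0 one_pos).ne' measure_ball_lt_top.ne
  rw [setAverage_eq, integral_norm_closedBall_zero_one, smul_eq_mul, measureReal_def,
    Measure.addHaar_closedBall_eq_addHaar_ball, ← measureReal_def]
  field_simp

end RadialAverage

theorem norm_gradient_sub_gradient {E : Type*} [NormedAddCommGroup E] [InnerProductSpace ℝ E]
    [CompleteSpace E] (f g : E → ℝ) (x y : E) :
    ‖gradient f x - gradient g y‖ = ‖fderiv ℝ f x - fderiv ℝ g y‖ := by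
  rw [gradient, gradient, ← map_sub, LinearIsometryEquiv.norm_map]

theorem norm_setAverage_sub_le {α F : Type*} [MeasurableSpace α] [NormedAddCommGroup F]
    [NormedSpace ℝ F] [CompleteSpace F] {μ : Measure α} {s : Set α} (hs : MeasurableSet s)
    (hs₀ : μ s ≠ 0) (hs_top : μ s ≠ ⊤) {f : α → F} (hf : IntegrableOn f s μ) (c : F)
    {g : α → ℝ} (hg : IntegrableOn g s μ) (hfg : ∀ x ∈ s, ‖f x - c‖ ≤ g x) :
    ‖(⨍ x in s, f x ∂μ) - c‖ ≤ ⨍ x in s, g x ∂μ := by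
  have hpos : 0 < μ.real s := ENNReal.toReal_pos hs₀ hs_top
  calc ‖(⨍ x in s, f x ∂μ) - c‖ = ‖(μ.real s)⁻¹ • ∫ x in s, (f x - c) ∂μ‖ := by
        rw [integral_sub hf (integrableOn_const hs_top), setIntegral_const, smul_sub, smul_smul,
          inv_mul_cancel₀ hpos.ne', one_smul, setAverage_eq]
    _ ≤ (μ.real s)⁻¹ * ∫ x in s, g x ∂μ := by
        rw [norm_smul, norm_inv, Real.norm_of_nonneg hpos.le]
        gcongr
        exact norm_integral_le_of_norm_le hg ((ae_restrict_iff' hs).mpr (.of_forall hfg))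
    _ = ⨍ x in s, g x ∂μ := (setAverage_eq μ g s).symm

section Translates

variable {E F : Type*} [NormedAddCommGroup E] [NormedSpace ℝ E] [FiniteDimensional ℝ E]
  [MeasurableSpace E] [BorelSpace E] [NormedAddCommGroup F] [NormedSpace ℝ F]
  {μ : Measure E} [IsFiniteMeasureOnCompacts μ] {K : Set E} {f : E → F}

theorem hasFDerivAt_setIntegral_comp_add_smul (hK : IsCompact K) (hf : Differentiable ℝ f)
    (hf' : Continuous (fderiv ℝ f)) (β : ℝ) (x : E) :
    HasFDerivAt (fun y ↦ ∫ u in K, f (y + β • u) ∂μ) (∫ u in K, fderiv ℝ f (x + β • u) ∂μ) x := by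
  obtain ⟨C, hC⟩ := ((isCompact_closedBall x 1).add (hK.smul β)).exists_bound_of_continuousOn
    hf'.continuousOn
  have hshift : Continuous fun u : E ↦ x + β • u := continuous_const.add (continuous_const_smul β)
  have : IsFiniteMeasure (μ.restrict K) := isFiniteMeasure_restrict.mpr hK.measure_ne_top
  refine hasFDerivAt_integral_of_dominated_of_fderiv_le (ball_mem_nhds x one_pos)
    (𝕜 := ℝ) (μ := μ.restrict K) (F := fun y u ↦ f (y + β • u))
    (F' := fun y u ↦ fderiv ℝ f (y + β • u)) (bound := fun _ ↦ C)
    ?_ ?_ ?_ ?_ (integrable_const C) ?_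
  · filter_upwards with y
    exact (hf.continuous.comp (continuous_const.add (continuous_const_smul β))).aestronglyMeasurable
  · exact (hf.continuous.comp hshift).continuousOn.integrableOn_compact hK
  · exact (hf'.comp hshift).aestronglyMeasurable
  · filter_upwards [ae_restrict_mem hK.measurableSet] with u hu y hy
    exact hC _ (add_mem_add (ball_subset_closedBall hy) (smul_mem_smul_set hu))
  · filter_upwards with u y _
    exact (hf _).hasFDerivAt.comp y ((hasFDerivAt_id y).add_const _)

theorem hasFDerivAt_setAverage_comp_add_smul (hK : IsCompact K) (hf : Differentiable ℝ f)
    (hf' : Continuous (fderiv ℝ f)) (β : ℝ) (x : E) :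
    HasFDerivAt (fun y ↦ ⨍ u in K, f (y + β • u) ∂μ) (⨍ u in K, fderiv ℝ f (x + β • u) ∂μ) x := by
  simp_rw [setAverage_eq]
  exact (hasFDerivAt_setIntegral_comp_add_smul hK hf hf' β x).const_smul _

theorem norm_fderiv_setAverage_comp_add_smul_sub_le [CompleteSpace F] (hK : IsCompact K)
    (hK₀ : μ K ≠ 0) (hf : Differentiable ℝ f) {L : ℝ}
    (hL : ∀ y z, ‖fderiv ℝ f y - fderiv ℝ f z‖ ≤ L * ‖y - z‖) (β : ℝ) (x : E) :
    ‖fderiv ℝ (fun y ↦ ⨍ u in K, f (y + β • u) ∂μ) x - fderiv ℝ f x‖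
      ≤ L * |β| * ⨍ u in K, ‖u‖ ∂μ := by
  have hf' : Continuous (fderiv ℝ f) := by
    refine (LipschitzWith.of_dist_le_mul (K := L.toNNReal) fun y z ↦ ?_).continuous
    rw [dist_eq_norm, dist_eq_norm]
    exact (hL y z).trans (mul_le_mul_of_nonneg_right (L.le_coe_toNNReal) (norm_nonneg _))
  have hshift : Continuous fun u : E ↦ x + β • u := continuous_const.add (continuous_const_smul β)
  have hmean : ⨍ u in K, L * |β| * ‖u‖ ∂μ = L * |β| * ⨍ u in K, ‖u‖ ∂μ := by
    rw [setAverage_eq, setAverage_eq, integral_const_mul, smul_eq_mul, smul_eq_mul]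
    ring
  rw [(hasFDerivAt_setAverage_comp_add_smul hK hf hf' β x).fderiv, ← hmean]
  refine norm_setAverage_sub_le hK.measurableSet hK₀ hK.measure_ne_top
    ((hf'.comp hshift).continuousOn.integrableOn_compact hK) _
    ((continuous_const.mul continuous_norm).continuousOn.integrableOn_compact hK) fun u _ ↦ ?_
  calc ‖fderiv ℝ f (x + β • u) - fderiv ℝ f x‖ ≤ L * ‖x + β • u - x‖ := hL _ _
    _ = L * |β| * ‖u‖ := by rw [add_sub_cancel_left, norm_smul, Real.norm_eq_abs, mul_assoc]

end Translates

theorem gradient_ballSmooth_dist_general (d : ℕ) (f : EuclideanSpace ℝ (Fin d) → ℝ) (L β : ℝ)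
    (hdiff : Differentiable ℝ f)
    (hL : ∀ x y, ‖gradient f x - gradient f y‖ ≤ L * ‖x - y‖)
    (x : EuclideanSpace ℝ (Fin d)) :
    ‖gradient (ballSmooth f β) x - gradient f x‖ ^ 2 ≤ L ^ 2 * d ^ 2 / 4 * β ^ 2 := by
  obtain rfl | hd := Nat.eq_zero_or_pos d
  · simp [Subsingleton.elim (gradient (ballSmooth f β) x - gradient f x) 0]
  have : Nonempty (Fin d) := ⟨⟨0, hd⟩⟩
  have hL' (y z : EuclideanSpace ℝ (Fin d)) : ‖fderiv ℝ f y - fderiv ℝ f z‖ ≤ L * ‖y - z‖ := by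
    rw [← norm_gradient_sub_gradient]
    exact hL y z
  have hbound := norm_fderiv_setAverage_comp_add_smul_sub_le (isCompact_closedBall 0 1)
    (measure_closedBall_pos volume 0 one_pos).ne' hdiff hL' β x
  rw [setAverage_norm_closedBall_zero_one, finrank_euclideanSpace_fin] at hbound
  have hd : (1 : ℝ) ≤ d := Nat.one_le_cast.mpr hd
  calc ‖gradient (ballSmooth f β) x - gradient f x‖ ^ 2
      ≤ (L * |β| * (d / (d + 1))) ^ 2 := by
        rw [norm_gradient_sub_gradient]
        exact pow_le_pow_left₀ (norm_nonneg _) hbound 2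
    _ = (L * |β|) ^ 2 * (d / (d + 1)) ^ 2 := by ring
    _ ≤ (L * |β|) ^ 2 * (d / 2) ^ 2 := by gcongr; linarith
    _ = L ^ 2 * d ^ 2 / 4 * β ^ 2 := by rw [mul_pow, sq_abs]; ring

theorem gradient_ballSmooth_dist (d : ℕ) (f : EuclideanSpace ℝ (Fin d) → ℝ) (L β : ℝ)
    (hβ : 0 < β) (hdiff : Differentiable ℝ f)
    (hL : ∀ x y, ‖gradient f x - gradient f y‖ ≤ L * ‖x - y‖)
    (x : EuclideanSpace ℝ (Fin d)) :
    ‖gradient (ballSmooth f β) x - gradient f x‖ ^ 2 ≤ L ^ 2 * d ^ 2 / 4 * β ^ 2 :=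
  gradient_ballSmooth_dist_general d f L β hdiff hL x
end

section
/- Let f : ℝ^d → ℝ be differentiable with L-Lipschitz gradient, β > 0, and define the forward-difference coordinate gradient estimator g(x, β) := ∑_{j=1}^d (f(x + β e_j) − f(x))/β · e_j. Then for every x ∈ ℝ^d, ‖g(x, β) − ∇f(x)‖² ≤ (L² d / 4) β². -/
open MeasureTheory

/-- Forward-difference coordinate gradient estimator. -/
noncomputable def fdGrad {d : ℕ} (f : EuclideanSpace ℝ (Fin d) → ℝ) (β : ℝ)
    (x : EuclideanSpace ℝ (Fin d)) : EuclideanSpace ℝ (Fin d) :=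
  ∑ j : Fin d, ((f (x + β • EuclideanSpace.single j (1 : ℝ)) - f x) / β) •
    EuclideanSpace.single j (1 : ℝ)

/-!
By the descent lemma, the `j`-th coordinate of `fdGrad f β x - ∇f x`, which is the second-order
remainder of `f` along `β eⱼ` divided by `β`, is at most `L |β| / 2` in absolute value; the
squared Euclidean norm is the sum of the `d` squared coordinates.
-/

section Descent

variable {E : Type*} [NormedAddCommGroup E] [InnerProductSpace ℝ E] [CompleteSpace E]
  {f : E → ℝ} {L : ℝ}

theorem abs_sub_sub_inner_gradient_le (hf : Differentiable ℝ f)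
    (hL : ∀ x y, ‖gradient f x - gradient f y‖ ≤ L * ‖x - y‖) (x v : E) :
    |f (x + v) - f x - inner ℝ (gradient f x) v| ≤ L / 2 * ‖v‖ ^ 2 := by
  -- `φ` vanishes at `0` and `|φ' t| ≤ L ‖v‖² t`, so it is fenced in by the parabola `L ‖v‖² t² / 2`.
  set φ : ℝ → ℝ := fun t => f (x + t • v) - f x - t * inner ℝ (gradient f x) v
  have hφ : ∀ t, HasDerivAt φ (inner ℝ (gradient f (x + t • v) - gradient f x) v) t := by
    intro t
    have hline : HasDerivAt (fun t : ℝ => x + t • v) v t := by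
      simpa using ((hasDerivAt_id t).smul_const v).const_add x
    have hcomp := (hf (x + t • v)).hasGradientAt.hasFDerivAt.comp_hasDerivAt t hline
    refine ((hcomp.sub_const (f x)).sub ((hasDerivAt_id t).mul_const _)).congr_deriv ?_
    simp [inner_sub_left]
  have hφ' : ∀ t ∈ Set.Ico (0 : ℝ) 1,
      ‖inner ℝ (gradient f (x + t • v) - gradient f x) v‖ ≤ L * ‖v‖ ^ 2 * t := by
    rintro t ⟨ht, -⟩
    calc ‖inner ℝ (gradient f (x + t • v) - gradient f x) v‖
        ≤ ‖gradient f (x + t • v) - gradient f x‖ * ‖v‖ := norm_inner_le_norm _ _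
      _ ≤ L * ‖(x + t • v) - x‖ * ‖v‖ := by gcongr; exact hL _ _
      _ = L * ‖v‖ ^ 2 * t := by
        rw [add_sub_cancel_left, norm_smul, Real.norm_of_nonneg ht]; ring
  have hB : ∀ t : ℝ, HasDerivAt (fun t => L / 2 * ‖v‖ ^ 2 * t ^ 2) (L * ‖v‖ ^ 2 * t) t := by
    intro t
    refine ((hasDerivAt_pow 2 t).const_mul (L / 2 * ‖v‖ ^ 2)).congr_deriv ?_
    ring
  have hfence := image_norm_le_of_norm_deriv_right_le_deriv_boundary (a := 0) (b := 1) (f := φ)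
    (fun t _ => (hφ t).continuousAt.continuousWithinAt) (fun t _ => (hφ t).hasDerivWithinAt)
    (by simp [φ]) hB hφ' (Set.right_mem_Icc.2 zero_le_one)
  simpa [φ] using hfence

end Descent

theorem EuclideanSpace.norm_sq_le_card_mul_sq {ι : Type*} [Fintype ι] {v : EuclideanSpace ℝ ι}
    {c : ℝ} (hv : ∀ i, |v i| ≤ c) : ‖v‖ ^ 2 ≤ Fintype.card ι * c ^ 2 := by
  rw [EuclideanSpace.norm_sq_eq]
  calc ∑ i, ‖v i‖ ^ 2 ≤ ∑ _i : ι, c ^ 2 :=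
        Finset.sum_le_sum fun i _ => pow_le_pow_left₀ (norm_nonneg _) (hv i) 2
    _ = Fintype.card ι * c ^ 2 := by simp

section FdGrad

variable {d : ℕ} {f : EuclideanSpace ℝ (Fin d) → ℝ} {β : ℝ}

theorem fdGrad_apply (x : EuclideanSpace ℝ (Fin d)) (j : Fin d) :
    fdGrad f β x j = (f (x + β • EuclideanSpace.single j (1 : ℝ)) - f x) / β := by
  simp [fdGrad, Pi.single_apply]

theorem abs_fdGrad_sub_gradient_apply_le {L : ℝ} (hβ : β ≠ 0) (hf : Differentiable ℝ f)
    (hL : ∀ x y, ‖gradient f x - gradient f y‖ ≤ L * ‖x - y‖)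
    (x : EuclideanSpace ℝ (Fin d)) (j : Fin d) :
    |(fdGrad f β x - gradient f x) j| ≤ L / 2 * |β| := by
  have hdescent := abs_sub_sub_inner_gradient_le hf hL x (β • EuclideanSpace.single j (1 : ℝ))
  rw [inner_smul_right, EuclideanSpace.inner_single_right, norm_smul] at hdescent
  have hsplit : (fdGrad f β x - gradient f x) j =
      (f (x + β • EuclideanSpace.single j (1 : ℝ)) - f x - β * gradient f x j) / β := by
    rw [PiLp.sub_apply, fdGrad_apply]
    field_simp
  rw [hsplit, abs_div, div_le_iff₀ (abs_pos.2 hβ)]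
  simpa [sq_abs, pow_two, mul_assoc] using hdescent

end FdGrad

theorem fdGrad_error (d : ℕ) (f : EuclideanSpace ℝ (Fin d) → ℝ) (L β : ℝ)
    (hβ : 0 < β) (hdiff : Differentiable ℝ f)
    (hL : ∀ x y, ‖gradient f x - gradient f y‖ ≤ L * ‖x - y‖)
    (x : EuclideanSpace ℝ (Fin d)) :
    ‖fdGrad f β x - gradient f x‖ ^ 2 ≤ L ^ 2 * d / 4 * β ^ 2 := by
  calc ‖fdGrad f β x - gradient f x‖ ^ 2 ≤ d * (L / 2 * |β|) ^ 2 := by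
        simpa using EuclideanSpace.norm_sq_le_card_mul_sq
          (abs_fdGrad_sub_gradient_apply_le hβ.ne' hdiff hL x)
    _ = L ^ 2 * d / 4 * β ^ 2 := by rw [mul_pow, sq_abs]; ring
end
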